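/- arXiv:2007.11303 — 3 statements merged into one kernel-verified Lean document; each statement's English description precedes it below -/
import Mathlib

section
/- Let V : ℝ → ℝ be defined by V(x) = (∫_{θ=0}^{2π} cos θ · exp(x · cos θ) dθ) / (∫_{θ=0}^{2π} exp(x · cos θ) dθ). Then V(x) tends to 1 as x tends to +∞. -/
open Real Filter

/-- The function `V(x) = (∫ cos θ e^{x cos θ} dθ) / (∫ e^{x cos θ} dθ)` over `[0, 2π]`. -/
noncomputable def V (x : ℝ) : ℝ :=
  (∫ θ in (0:ℝ)..(2 * π), Real.cos θ * Real.exp (x * Real.cos θ)) /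
  (∫ θ in (0:ℝ)..(2 * π), Real.exp (x * Real.cos θ))

/-!
`V x` is the mean of `cos` under the weight `exp (x * cos θ)` on `(0, 2π]`, and such tilted means
of a bounded `g` tend to its essential supremum `M`. Indeed, with `Z = ∫ exp (x * g)`,
`M - mean = ∫ (M - g) exp (x * g) / Z`. Where `g > M - 2η` the factor `M - g` is below `2η`;
elsewhere `exp (x * g) ≤ exp (x * (M - 2η))`, whereas `Z ≥ μ {g > M - η} * exp (x * (M - η))`.
Hence `M - mean ≤ 2η + O(exp (-η x))`.
-/

open MeasureTheory Set

/-- The mean of `g` under the tilted measure `μ.tilted (fun a => x * g a)`. -/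
noncomputable def tiltedMean {α : Type*} [MeasurableSpace α] (μ : Measure α) (g : α → ℝ) (x : ℝ) :
    ℝ :=
  (∫ a, g a * exp (x * g a) ∂μ) / ∫ a, exp (x * g a) ∂μ

section TiltedMean

variable {α : Type*} [MeasurableSpace α] {μ : Measure α} [IsFiniteMeasure μ] {g : α → ℝ}
  {m M : ℝ}

lemma integrable_exp_mul_of_bounded (hg : Measurable g) (hm : ∀ a, m ≤ g a) (hM : ∀ a, g a ≤ M)
    (x : ℝ) : Integrable (fun a => exp (x * g a)) μ := by
  refine .of_bound (hg.const_mul x).exp.aestronglyMeasurable (max (exp (x * m)) (exp (x * M)))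
    (.of_forall fun a => ?_)
  rw [norm_of_nonneg (exp_pos _).le]
  rcases le_total 0 x with hx | hx
  · exact le_max_of_le_right (exp_le_exp.2 (mul_le_mul_of_nonneg_left (hM a) hx))
  · exact le_max_of_le_left (exp_le_exp.2 (mul_le_mul_of_nonpos_left (hm a) hx))

lemma integrable_mul_exp_mul_of_bounded (hg : Measurable g) (hm : ∀ a, m ≤ g a)
    (hM : ∀ a, g a ≤ M) (x : ℝ) : Integrable (fun a => g a * exp (x * g a)) μ :=
  (integrable_exp_mul_of_bounded hg hm hM x).bdd_mul hg.aestronglyMeasurable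
    (.of_forall fun a => abs_le_max_abs_abs (hm a) (hM a))

lemma sub_tiltedMean (hg : Measurable g) (hm : ∀ a, m ≤ g a) (hM : ∀ a, g a ≤ M) {x : ℝ}
    (hZ : ∫ a, exp (x * g a) ∂μ ≠ 0) :
    M - tiltedMean μ g x = (∫ a, (M - g a) * exp (x * g a) ∂μ) / ∫ a, exp (x * g a) ∂μ := by
  simp_rw [sub_mul]
  rw [integral_sub ((integrable_exp_mul_of_bounded hg hm hM x).const_mul M)
    (integrable_mul_exp_mul_of_bounded hg hm hM x), integral_const_mul, sub_div,
    mul_div_cancel_right₀ _ hZ, tiltedMean]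

lemma tiltedMean_le [NeZero μ] (hg : Measurable g) (hm : ∀ a, m ≤ g a) (hM : ∀ a, g a ≤ M)
    (x : ℝ) : tiltedMean μ g x ≤ M := by
  have hZ := integral_exp_pos (integrable_exp_mul_of_bounded (μ := μ) hg hm hM x)
  rw [← sub_nonneg, sub_tiltedMean hg hm hM hZ.ne']
  exact div_nonneg (integral_nonneg fun a => mul_nonneg (sub_nonneg.2 (hM a)) (exp_pos _).le)
    hZ.le

lemma exp_mul_mul_measureReal_le_integral (hg : Measurable g) (hm : ∀ a, m ≤ g a)
    (hM : ∀ a, g a ≤ M) {x : ℝ} (hx : 0 ≤ x) (c : ℝ) :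
    exp (x * c) * μ.real {a | c < g a} ≤ ∫ a, exp (x * g a) ∂μ := by
  have hint := integrable_exp_mul_of_bounded (μ := μ) hg hm hM x
  calc exp (x * c) * μ.real {a | c < g a}
      ≤ ∫ a in {a | c < g a}, exp (x * g a) ∂μ :=
        setIntegral_ge_of_const_le_real (measurableSet_lt measurable_const hg) (measure_ne_top _ _)
          (fun a ha => exp_le_exp.2 (mul_le_mul_of_nonneg_left (le_of_lt ha) hx)) hint.integrableOn
    _ ≤ ∫ a, exp (x * g a) ∂μ := setIntegral_le_integral hint (.of_forall fun a => (exp_pos _).le)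

lemma integral_sub_mul_exp_mul_le (hg : Measurable g) (hm : ∀ a, m ≤ g a) (hM : ∀ a, g a ≤ M)
    {x η : ℝ} (hx : 0 ≤ x) (hη : 0 ≤ η) :
    ∫ a, (M - g a) * exp (x * g a) ∂μ ≤
      η * ∫ a, exp (x * g a) ∂μ + μ.real univ * ((M - m) * exp (x * (M - η))) := by
  have hint := integrable_exp_mul_of_bounded (μ := μ) hg hm hM x
  have hbound (a : α) :
      (M - g a) * exp (x * g a) ≤ η * exp (x * g a) + (M - m) * exp (x * (M - η)) := by
    have hmM : 0 ≤ M - m := by linarith [hm a, hM a]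
    by_cases hnear : M - g a ≤ η
    · have := mul_le_mul_of_nonneg_right hnear (exp_pos (x * g a)).le
      nlinarith [exp_pos (x * (M - η))]
    · have hfar : exp (x * g a) ≤ exp (x * (M - η)) :=
        exp_le_exp.2 (mul_le_mul_of_nonneg_left (by linarith) hx)
      have := mul_le_mul (show M - g a ≤ M - m by linarith [hm a]) hfar (exp_pos _).le hmM
      nlinarith [exp_pos (x * g a)]
  calc ∫ a, (M - g a) * exp (x * g a) ∂μ
      ≤ ∫ a, (η * exp (x * g a) + (M - m) * exp (x * (M - η))) ∂μ :=
        integral_mono (hint.bdd_mul (c := M - m) (measurable_const.sub hg).aestronglyMeasurable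
          (.of_forall fun a => abs_le.2 ⟨by linarith [hm a, hM a], by linarith [hm a]⟩))
          ((hint.const_mul η).add (integrable_const _)) hbound
    _ = _ := by
      rw [integral_add (hint.const_mul η) (integrable_const _), integral_const_mul,
        integral_const, smul_eq_mul]

lemma sub_tiltedMean_le (hg : Measurable g) (hm : ∀ a, m ≤ g a) (hM : ∀ a, g a ≤ M) {x η : ℝ}
    (hx : 0 ≤ x) (hη : 0 ≤ η) (hess : μ {a | M - η < g a} ≠ 0) :
    M - tiltedMean μ g x ≤
      2 * η + (M - m) * μ.real univ / μ.real {a | M - η < g a} * exp (-(η * x)) := by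
  set p := μ.real {a | M - η < g a}
  have hp : 0 < p := ENNReal.toReal_pos hess (measure_ne_top _ _)
  have hmM : m ≤ M := by
    obtain ⟨a, -⟩ := nonempty_of_measure_ne_zero hess
    exact (hm a).trans (hM a)
  have hZ := exp_mul_mul_measureReal_le_integral (μ := μ) hg hm hM hx (M - η)
  have hZpos : 0 < ∫ a, exp (x * g a) ∂μ := lt_of_lt_of_le (by positivity) hZ
  have hfar : μ.real univ * ((M - m) * exp (x * (M - 2 * η))) ≤
      (M - m) * μ.real univ / p * exp (-(η * x)) * ∫ a, exp (x * g a) ∂μ :=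
    calc μ.real univ * ((M - m) * exp (x * (M - 2 * η)))
        = (M - m) * μ.real univ / p * exp (-(η * x)) * (exp (x * (M - η)) * p) := by
          rw [show x * (M - 2 * η) = -(η * x) + x * (M - η) by ring, exp_add]
          field_simp
      _ ≤ _ := by gcongr
  rw [sub_tiltedMean hg hm hM hZpos.ne', div_le_iff₀ hZpos]
  linarith [integral_sub_mul_exp_mul_le (μ := μ) hg hm hM hx (by linarith : 0 ≤ 2 * η)]

theorem tendsto_tiltedMean_atTop (hg : Measurable g) (hm : ∀ a, m ≤ g a) (hM : ∀ a, g a ≤ M)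
    (hess : ∀ η > 0, μ {a | M - η < g a} ≠ 0) : Tendsto (tiltedMean μ g) atTop (nhds M) := by
  have : NeZero μ := ⟨fun h => hess 1 one_pos (by simp [h])⟩
  refine tendsto_order.2 ⟨fun b hb => ?_, fun b hb => .of_forall fun x =>
    (tiltedMean_le hg hm hM x).trans_lt hb⟩
  set η := (M - b) / 4 with hη_def
  have hη : 0 < η := by positivity
  have hdecay : Tendsto (fun x => (M - m) * μ.real univ / μ.real {a | M - η < g a} *
      exp (-(η * x))) atTop (nhds 0) := by
    simpa using (tendsto_exp_neg_atTop_nhds_zero.comp (tendsto_id.const_mul_atTop hη)).const_mul _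
  filter_upwards [eventually_ge_atTop 0, hdecay.eventually (gt_mem_nhds hη)] with x hx hsmall
  linarith [sub_tiltedMean_le hg hm hM hx hη.le (hess η hη)]

end TiltedMean

lemma volume_Ioc_cos_gt_ne_zero {η : ℝ} (hη : 0 < η) :
    volume.restrict (Ioc 0 (2 * π)) {θ | 1 - η < cos θ} ≠ 0 := by
  set δ := min 1 η
  have hsub : Ioo 0 δ ⊆ {θ | 1 - η < cos θ} ∩ Ioc 0 (2 * π) := by
    rintro θ ⟨hθ0, hθδ⟩
    have h1 : θ < 1 := hθδ.trans_le (min_le_left _ _)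
    have hθη : θ < η := hθδ.trans_le (min_le_right _ _)
    refine ⟨?_, hθ0, by linarith [pi_gt_three]⟩
    show 1 - η < cos θ
    nlinarith [one_sub_sq_div_two_le_cos (x := θ), mul_lt_mul_of_pos_left h1 hθ0]
  refine (lt_of_lt_of_le ?_ ((measure_mono hsub).trans (Measure.le_restrict_apply _ _))).ne'
  simp [δ, hη]

lemma V_eq_tiltedMean : V = tiltedMean (volume.restrict (Ioc 0 (2 * π))) cos := by
  ext x
  simp only [V, tiltedMean, intervalIntegral.integral_of_le two_pi_pos.le]

theorem V_tendsto_one : Tendsto V atTop (nhds 1) := by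
  rw [V_eq_tiltedMean]
  exact tendsto_tiltedMean_atTop measurable_cos neg_one_le_cos cos_le_one
    fun η hη => volume_Ioc_cos_gt_ne_zero hη
end

section
/- Let V : ℝ → ℝ be defined by V(x) = (∫_{θ=0}^{2π} cos θ · exp(x · cos θ) dθ) / (∫_{θ=0}^{2π} exp(x · cos θ) dθ) and, for x ≠ 0, set W(x) = 2·V(x)/x. Then W(x) → 1 as x → 0, W(x) → 0 as x → +∞, W is continuous and strictly decreasing on (0, ∞), and W(−x) = W(x) for every x ≠ 0; in particular 0 < W(x) < 1 for every x ≠ 0. -/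
open Real Filter Set

/-- The function `W(x) = 2 V(x) / x`. -/
noncomputable def W (x : ℝ) : ℝ := 2 * V x / x

/-!
Write `mₖ(x) = ∫₀^{2π} cosᵏ θ e^{x cos θ} dθ`, so that `mₖ' = mₖ₊₁` and `V = m₁ / m₀`.
Integrating `(sin θ e^{x cos θ})'` over a period gives `m₁ = x (m₀ - m₂)`, hence
`W = 2 (1 - m₂ / m₀)` off `0`; the right-hand side is smooth and even, equals `1` at `0`, and
has derivative `2 (m₁ m₂ - m₀ m₃) / m₀²`. Strict decrease is therefore the Turán-type inequality
`m₁ m₂ < m₀ m₃` for `x > 0`. With `u = cos θ`, `v = cos φ`,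
`2 (m₀ m₃ - m₁ m₂) = ∬ (u + v) (u - v)² e^{x u} e^{x v}`, which is odd in `x` since `θ ↦ θ + π`
flips the sign of `cos`; and the integrand at `x` minus the one at `-x` is
`(u - v)² (u + v) (e^{x (u + v)} - e^{-x (u + v)}) ≥ 0`. The limit at infinity comes from
`0 < W x ≤ 2 / x`, as `m₁ ≤ m₀`.
-/

open intervalIntegral

theorem Function.Periodic.intervalIntegral_comp_add_right {E : Type*} [NormedAddCommGroup E]
    [NormedSpace ℝ E] {f : ℝ → E} {T : ℝ} (hf : f.Periodic T) (t : ℝ) :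
    ∫ θ in (0:ℝ)..T, f (θ + t) = ∫ θ in (0:ℝ)..T, f θ := by
  rw [integral_comp_add_right, zero_add, add_comm, hf.intervalIntegral_add_eq t 0, zero_add]

theorem intervalIntegral_intervalIntegral_pos {F : ℝ → ℝ → ℝ}
    (hF : Continuous (Function.uncurry F)) {a b c d : ℝ} (hab : a < b) (hcd : c < d)
    (hF_nonneg : ∀ s t, 0 ≤ F s t) {s₀ t₀ : ℝ} (hs₀ : s₀ ∈ Icc a b) (ht₀ : t₀ ∈ Icc c d)
    (hpos : 0 < F s₀ t₀) :
    0 < ∫ s in a..b, ∫ t in c..d, F s t := by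
  refine integral_pos hab
    (continuous_parametric_intervalIntegral_of_continuous' hF c d).continuousOn
    (fun s _ => integral_nonneg hcd.le fun t _ => hF_nonneg s t) ⟨s₀, hs₀, ?_⟩
  exact integral_pos hcd (hF.uncurry_left s₀).continuousOn (fun t _ => hF_nonneg s₀ t)
    ⟨t₀, ht₀, hpos⟩

theorem intervalIntegral_intervalIntegral_sub {F G : ℝ → ℝ → ℝ}
    (hF : Continuous (Function.uncurry F)) (hG : Continuous (Function.uncurry G)) (a b c d : ℝ) :
    ∫ s in a..b, ∫ t in c..d, (F s t - G s t) =
      (∫ s in a..b, ∫ t in c..d, F s t) - ∫ s in a..b, ∫ t in c..d, G s t := by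
  rw [← integral_sub
    ((continuous_parametric_intervalIntegral_of_continuous' hF c d).intervalIntegrable a b)
    ((continuous_parametric_intervalIntegral_of_continuous' hG c d).intervalIntegrable a b)]
  exact integral_congr fun s _ => integral_sub
    ((hF.uncurry_left s).intervalIntegrable c d) ((hG.uncurry_left s).intervalIntegrable c d)

theorem mul_exp_sub_exp_neg_nonneg {x : ℝ} (hx : 0 ≤ x) (s : ℝ) :
    0 ≤ s * (exp (x * s) - exp (-(x * s))) := by
  rcases le_total 0 s with hs | hs
  · exact mul_nonneg hs (sub_nonneg.2 (exp_le_exp.2 (by nlinarith)))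
  · exact mul_nonneg_of_nonpos_of_nonpos hs (sub_nonpos.2 (exp_le_exp.2 (by nlinarith)))

noncomputable def cosMoment (k : ℕ) (x : ℝ) : ℝ :=
  ∫ θ in (0:ℝ)..(2 * π), cos θ ^ k * exp (x * cos θ)

theorem hasDerivAt_cosMoment (k : ℕ) (x : ℝ) :
    HasDerivAt (cosMoment k) (cosMoment (k + 1) x) x := by
  have hF : ∀ y θ, HasDerivAt (fun y => cos θ ^ k * exp (y * cos θ))
      (cos θ ^ (k + 1) * exp (y * cos θ)) y := fun y θ =>
    (((hasDerivAt_mul_const (cos θ)).exp).const_mul (cos θ ^ k)).congr_deriv (by ring)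
  have hbound : ∀ θ, ∀ y ∈ Metric.ball x 1,
      ‖cos θ ^ (k + 1) * exp (y * cos θ)‖ ≤ exp (|x| + 1) := fun θ y hy => by
    have hy' : |y| ≤ |x| + 1 := by
      rw [Metric.mem_ball, Real.dist_eq] at hy
      linarith [abs_sub_abs_le_abs_sub y x]
    have hcos := abs_cos_le_one θ
    rw [norm_mul, norm_pow, Real.norm_eq_abs, Real.norm_of_nonneg (exp_pos _).le,
      ← one_mul (exp (|x| + 1))]
    gcongr
    · exact pow_le_one₀ (abs_nonneg _) hcos
    · calc y * cos θ ≤ |y| * |cos θ| := (le_abs_self _).trans_eq (abs_mul _ _)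
        _ ≤ |x| + 1 := by nlinarith [abs_nonneg y]
  exact (hasDerivAt_integral_of_dominated_loc_of_deriv_le (Metric.ball_mem_nhds x one_pos)
    (Eventually.of_forall fun y => (by fun_prop : Continuous _).aestronglyMeasurable)
    ((by fun_prop : Continuous _).intervalIntegrable _ _)
    (by fun_prop : Continuous _).aestronglyMeasurable
    (Eventually.of_forall fun θ _ => hbound θ) intervalIntegrable_const
    (Eventually.of_forall fun θ _ y _ => hF y θ)).2

theorem cosMoment_neg (k : ℕ) (x : ℝ) : cosMoment k (-x) = (-1) ^ k * cosMoment k x := by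
  have hper : Function.Periodic (fun θ => cos θ ^ k * exp (-x * cos θ)) (2 * π) :=
    fun θ => by simp only [cos_add_two_pi]
  rw [cosMoment, cosMoment, ← hper.intervalIntegral_comp_add_right π, ← integral_const_mul]
  congr 1 with θ
  rw [cos_add_pi, neg_pow, neg_mul_neg, mul_assoc]

theorem cosMoment_zero_pos (x : ℝ) : 0 < cosMoment 0 x :=
  intervalIntegral_pos_of_pos ((by fun_prop : Continuous _).intervalIntegrable _ _)
    (fun θ => by positivity) two_pi_pos

theorem cosMoment_one_eq (x : ℝ) : cosMoment 1 x = x * (cosMoment 0 x - cosMoment 2 x) := by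
  have hderiv : ∀ θ ∈ uIcc (0:ℝ) (2 * π), HasDerivAt (fun t => sin t * exp (x * cos t))
      (cos θ ^ 1 * exp (x * cos θ) -
        x * (cos θ ^ 0 * exp (x * cos θ) - cos θ ^ 2 * exp (x * cos θ))) θ := fun θ _ => by
    refine ((hasDerivAt_sin θ).mul ((hasDerivAt_cos θ).const_mul x).exp).congr_deriv ?_
    linear_combination (-x * exp (x * cos θ)) * sin_sq_add_cos_sq θ
  have hFTC := integral_eq_sub_of_hasDerivAt hderiv
    ((by fun_prop : Continuous _).intervalIntegrable _ _)
  simp (disch := exact (Continuous.intervalIntegrable (by fun_prop) _ _)) only [integral_sub,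
    integral_const_mul, sin_two_pi, sin_zero, zero_mul, sub_zero] at hFTC
  unfold cosMoment
  linarith

theorem cosMoment_one_le_cosMoment_zero (x : ℝ) : cosMoment 1 x ≤ cosMoment 0 x :=
  integral_mono_on two_pi_pos.le ((by fun_prop : Continuous _).intervalIntegrable _ _)
    ((by fun_prop : Continuous _).intervalIntegrable _ _) fun θ _ => by
      rw [pow_one, pow_zero]
      gcongr
      exact cos_le_one θ

theorem cosMoment_two_lt_cosMoment_zero (x : ℝ) : cosMoment 2 x < cosMoment 0 x := by
  refine integral_lt_integral_of_continuousOn_of_le_of_exists_lt two_pi_pos (by fun_prop)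
    (by fun_prop) (fun θ _ => ?_) ⟨π / 2, ⟨by positivity, by linarith [pi_pos]⟩, by simp⟩
  rw [pow_zero]
  gcongr
  exact sq_le_one_iff_abs_le_one _ |>.2 (abs_cos_le_one θ)

theorem cosMoment_zero_zero : cosMoment 0 0 = 2 * π := by
  simp [cosMoment]

theorem cosMoment_two_zero : cosMoment 2 0 = π := by
  simp [cosMoment, integral_cos_sq]

noncomputable def cosPairKernel (x θ φ : ℝ) : ℝ :=
  (cos θ + cos φ) * (cos θ - cos φ) ^ 2 * (exp (x * cos θ) * exp (x * cos φ))

theorem continuous_cosPairKernel (x : ℝ) : Continuous (Function.uncurry (cosPairKernel x)) := by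
  unfold cosPairKernel
  fun_prop

theorem integral_integral_cosPairKernel (x : ℝ) :
    ∫ θ in (0:ℝ)..(2 * π), ∫ φ in (0:ℝ)..(2 * π), cosPairKernel x θ φ =
      2 * (cosMoment 0 x * cosMoment 3 x - cosMoment 1 x * cosMoment 2 x) := by
  have expand : ∀ θ φ, cosPairKernel x θ φ =
      cos θ ^ 3 * exp (x * cos θ) * (cos φ ^ 0 * exp (x * cos φ))
      - cos θ ^ 2 * exp (x * cos θ) * (cos φ ^ 1 * exp (x * cos φ))
      - cos θ ^ 1 * exp (x * cos θ) * (cos φ ^ 2 * exp (x * cos φ))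
      + cos θ ^ 0 * exp (x * cos θ) * (cos φ ^ 3 * exp (x * cos φ)) := fun θ φ => by
    rw [cosPairKernel]
    ring
  simp (disch := exact (Continuous.intervalIntegrable (by fun_prop) _ _)) only [expand,
    integral_add, integral_sub, integral_const_mul, integral_mul_const]
  unfold cosMoment
  ring

theorem cosPairKernel_sub_cosPairKernel_neg (x θ φ : ℝ) :
    cosPairKernel x θ φ - cosPairKernel (-x) θ φ = (cos θ - cos φ) ^ 2 *
      ((cos θ + cos φ) * (exp (x * (cos θ + cos φ)) - exp (-(x * (cos θ + cos φ))))) := by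
  simp only [cosPairKernel, ← exp_add]
  ring_nf

theorem cosMoment_one_mul_cosMoment_two_lt {x : ℝ} (hx : 0 < x) :
    cosMoment 1 x * cosMoment 2 x < cosMoment 0 x * cosMoment 3 x := by
  have hpos : 0 < ∫ θ in (0:ℝ)..(2 * π), ∫ φ in (0:ℝ)..(2 * π),
      (cosPairKernel x θ φ - cosPairKernel (-x) θ φ) := by
    refine intervalIntegral_intervalIntegral_pos (by unfold cosPairKernel; fun_prop) two_pi_pos
      two_pi_pos (fun θ φ => ?_) (s₀ := 0) (t₀ := π / 2) ⟨le_rfl, two_pi_pos.le⟩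
      ⟨by positivity, by linarith [pi_pos]⟩ (by simp [cosPairKernel, hx])
    rw [cosPairKernel_sub_cosPairKernel_neg]
    exact mul_nonneg (sq_nonneg _) (mul_exp_sub_exp_neg_nonneg hx.le _)
  rw [intervalIntegral_intervalIntegral_sub (continuous_cosPairKernel x)
    (continuous_cosPairKernel (-x)), integral_integral_cosPairKernel,
    integral_integral_cosPairKernel] at hpos
  simp only [cosMoment_neg] at hpos
  norm_num at hpos
  linarith

theorem V_eq (x : ℝ) : V x = cosMoment 1 x / cosMoment 0 x := by
  simp [V, cosMoment]

theorem V_le_one (x : ℝ) : V x ≤ 1 := by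
  rw [V_eq, div_le_one (cosMoment_zero_pos x)]
  exact cosMoment_one_le_cosMoment_zero x

noncomputable def Wext (x : ℝ) : ℝ := 2 * (1 - cosMoment 2 x / cosMoment 0 x)

theorem W_eq_Wext {x : ℝ} (hx : x ≠ 0) : W x = Wext x := by
  have := (cosMoment_zero_pos x).ne'
  rw [W, Wext, V_eq, cosMoment_one_eq]
  field_simp

theorem hasDerivAt_Wext (x : ℝ) : HasDerivAt Wext
    (2 * (cosMoment 1 x * cosMoment 2 x - cosMoment 0 x * cosMoment 3 x) / cosMoment 0 x ^ 2) x :=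
  ((((hasDerivAt_cosMoment 2 x).div (hasDerivAt_cosMoment 0 x)
    (cosMoment_zero_pos x).ne').const_sub 1).const_mul 2).congr_deriv (by ring)

theorem continuous_Wext : Continuous Wext :=
  continuous_iff_continuousAt.2 fun x => (hasDerivAt_Wext x).continuousAt

theorem strictAntiOn_Wext : StrictAntiOn Wext (Ici 0) := by
  refine strictAntiOn_of_deriv_neg (convex_Ici 0) continuous_Wext.continuousOn fun x hx => ?_
  rw [interior_Ici] at hx
  rw [(hasDerivAt_Wext x).deriv]
  have := cosMoment_zero_pos x
  exact div_neg_of_neg_of_pos (by linarith [cosMoment_one_mul_cosMoment_two_lt hx])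
    (by positivity)

theorem Wext_zero : Wext 0 = 1 := by
  rw [Wext, cosMoment_zero_zero, cosMoment_two_zero]
  field_simp
  norm_num

theorem Wext_pos (x : ℝ) : 0 < Wext x :=
  mul_pos two_pos (sub_pos.2 ((div_lt_one (cosMoment_zero_pos x)).2
    (cosMoment_two_lt_cosMoment_zero x)))

theorem Wext_neg (x : ℝ) : Wext (-x) = Wext x := by
  simp only [Wext, cosMoment_neg]
  norm_num

theorem Wext_abs (x : ℝ) : Wext |x| = Wext x := by
  rcases abs_choice x with h | h <;> rw [h]
  exact Wext_neg x

theorem Wext_lt_one {x : ℝ} (hx : x ≠ 0) : Wext x < 1 := by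
  rw [← Wext_abs, ← Wext_zero]
  exact strictAntiOn_Wext self_mem_Ici (abs_nonneg x) (abs_pos.2 hx)

theorem W_le_two_div {x : ℝ} (hx : 0 < x) : W x ≤ 2 / x := by
  rw [W]
  gcongr
  linarith [V_le_one x]

theorem W_properties :
    Tendsto W (nhdsWithin 0 {(0:ℝ)}ᶜ) (nhds 1) ∧
      Tendsto W atTop (nhds 0) ∧
      ContinuousOn W (Ioi (0:ℝ)) ∧
      StrictAntiOn W (Ioi (0:ℝ)) ∧
      (∀ x : ℝ, x ≠ 0 → W (-x) = W x) ∧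
      (∀ x : ℝ, x ≠ 0 → 0 < W x ∧ W x < 1) := by
  have hW : EqOn Wext W (Ioi 0) := fun x hx => (W_eq_Wext (ne_of_gt hx)).symm
  refine ⟨?_, ?_, continuous_Wext.continuousOn.congr hW.symm,
    (strictAntiOn_Wext.mono Ioi_subset_Ici_self).congr hW, fun x hx => ?_, fun x hx => ?_⟩
  · rw [← Wext_zero]
    exact ((continuous_Wext.tendsto 0).mono_left nhdsWithin_le_nhds).congr'
      (eventually_nhdsWithin_of_forall fun x hx => (W_eq_Wext hx).symm)
  · refine tendsto_of_tendsto_of_tendsto_of_le_of_le' tendsto_const_nhds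
      (tendsto_const_nhds (x := (2:ℝ)).div_atTop tendsto_id) ?_ ?_ <;>
      filter_upwards [eventually_gt_atTop 0] with x hx
    · exact hW hx ▸ (Wext_pos x).le
    · exact W_le_two_div hx
  · rw [W_eq_Wext hx, W_eq_Wext (neg_ne_zero.2 hx), Wext_neg]
  · rw [W_eq_Wext hx]
    exact ⟨Wext_pos x, Wext_lt_one hx⟩
end

section
/- Let K₁ ∈ ℝ, L₁ ∈ ℝ \ {0}, and let (r₁, r₂) ∈ [0,1]² with (r₁, r₂) ≠ (0,0). If r₁ ≥ (K₁·r₁ + L₁·r₂)/2, then h₁(r₁, r₂) < 0, i.e., V(K₁·r₁ + L₁·r₂) < r₁. -/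
/-!
Integrating by parts against `e^{x cos θ}` gives `∫ cos θ e^{x cos θ} = x ∫ sin² θ e^{x cos θ}`,
so `V x` has the sign of `x`; at `x = 0` the hypotheses force `r₁ > 0`. For `x ≠ 0`, a second
integration by parts (with `sin θ cos θ`) and `∫ sin² θ cos θ = 0` give
`∫ e^{x cos θ} - 2 ∫ sin² θ e^{x cos θ} = ∫ sin² θ · t (e^t - 1)` with `t = x cos θ`, which is
positive; hence `V x < x / 2 ≤ r₁` when `x > 0`.
-/

open Real Set

open intervalIntegral

open MeasureTheory in
theorem intervalIntegral_pos_of_nonneg_of_pos_on_Ioo {f : ℝ → ℝ} {a b c d : ℝ}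
    (hfi : IntervalIntegrable f volume a b) (hf : ∀ x ∈ Ioc a b, 0 ≤ f x)
    (hac : a ≤ c) (hcd : c < d) (hdb : d ≤ b) (hpos : ∀ x ∈ Ioo c d, 0 < f x) :
    0 < ∫ x in a..b, f x := by
  have hab : a < b := by linarith
  rw [integral_pos_iff_support_of_nonneg_ae' ?_ hfi]
  · refine ⟨hab, ?_⟩
    calc (0 : ENNReal) < volume (Ioo c d) := by simp [hcd]
      _ ≤ volume (Function.support f ∩ Ioc a b) := measure_mono fun x hx =>
        ⟨(hpos x hx).ne', by linarith [hx.1], by linarith [hx.2]⟩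
  · rw [uIoc_of_le hab.le]
    exact ae_restrict_of_forall_mem measurableSet_Ioc hf

theorem mul_exp_sub_one_pos {t : ℝ} (ht : t ≠ 0) : 0 < t * (exp t - 1) := by
  rcases ht.lt_or_gt with h | h
  · exact mul_pos_of_neg_of_neg h (by linarith [exp_lt_one_iff.mpr h])
  · exact mul_pos h (by linarith [one_lt_exp_iff.mpr h])

theorem mul_exp_sub_one_nonneg (t : ℝ) : 0 ≤ t * (exp t - 1) := by
  rcases eq_or_ne t 0 with rfl | ht
  · simp
  · exact (mul_exp_sub_one_pos ht).le

theorem integral_deriv_mul_exp_mul_cos {g g' : ℝ → ℝ} (x : ℝ)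
    (hg : ∀ θ, HasDerivAt g (g' θ) θ) (hg' : Continuous g') (hper : g (2 * π) = g 0) :
    ∫ θ in (0:ℝ)..2 * π, g' θ * exp (x * cos θ) =
      x * ∫ θ in (0:ℝ)..2 * π, g θ * sin θ * exp (x * cos θ) := by
  have hgc : Continuous g := continuous_iff_continuousAt.2 fun θ => (hg θ).continuousAt
  have hderiv : ∀ θ ∈ uIcc (0:ℝ) (2 * π), HasDerivAt (fun θ => g θ * exp (x * cos θ))
      (g' θ * exp (x * cos θ) - x * (g θ * sin θ * exp (x * cos θ))) θ := fun θ _ =>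
    ((hg θ).mul ((hasDerivAt_cos θ).const_mul x).exp).congr_deriv (by ring)
  have h := integral_eq_sub_of_hasDerivAt hderiv ((by fun_prop : Continuous fun θ =>
    g' θ * exp (x * cos θ) - x * (g θ * sin θ * exp (x * cos θ))).intervalIntegrable _ _)
  rw [integral_sub ((by fun_prop : Continuous fun θ => g' θ * exp (x * cos θ)).intervalIntegrable _ _)
    ((by fun_prop : Continuous fun θ => x * (g θ * sin θ * exp (x * cos θ))).intervalIntegrable _ _),
    integral_const_mul] at h
  simp only [hper, cos_two_pi, cos_zero, sub_self] at h
  linarith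

theorem integral_exp_mul_cos_pos (x : ℝ) : 0 < ∫ θ in (0:ℝ)..2 * π, exp (x * cos θ) :=
  intervalIntegral_pos_of_pos_on ((by fun_prop : Continuous _).intervalIntegrable _ _)
    (fun θ _ => exp_pos _) (by positivity)

theorem integral_sin_sq_mul_exp_mul_cos_pos (x : ℝ) :
    0 < ∫ θ in (0:ℝ)..2 * π, sin θ ^ 2 * exp (x * cos θ) := by
  refine intervalIntegral_pos_of_nonneg_of_pos_on_Ioo
    ((by fun_prop : Continuous _).intervalIntegrable _ _) (fun θ _ => by positivity)
    le_rfl pi_pos (by linarith [pi_pos]) fun θ hθ => ?_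
  have := sin_pos_of_pos_of_lt_pi hθ.1 hθ.2
  positivity

theorem integral_cos_mul_exp_mul_cos (x : ℝ) :
    ∫ θ in (0:ℝ)..2 * π, cos θ * exp (x * cos θ) =
      x * ∫ θ in (0:ℝ)..2 * π, sin θ ^ 2 * exp (x * cos θ) := by
  simpa only [← sq] using
    integral_deriv_mul_exp_mul_cos x hasDerivAt_sin continuous_cos (by simp)

theorem V_eq_s11 (x : ℝ) :
    V x = x * (∫ θ in (0:ℝ)..2 * π, sin θ ^ 2 * exp (x * cos θ)) /
      ∫ θ in (0:ℝ)..2 * π, exp (x * cos θ) := by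
  rw [V, integral_cos_mul_exp_mul_cos]

theorem two_mul_integral_sin_sq_mul_exp_mul_cos_lt {x : ℝ} (hx : x ≠ 0) :
    2 * ∫ θ in (0:ℝ)..2 * π, sin θ ^ 2 * exp (x * cos θ) <
      ∫ θ in (0:ℝ)..2 * π, exp (x * cos θ) := by
  have hparts := integral_deriv_mul_exp_mul_cos x (g := fun θ => sin θ * cos θ)
    (g' := fun θ => cos θ ^ 2 - sin θ ^ 2)
    (fun θ => ((hasDerivAt_sin θ).mul (hasDerivAt_cos θ)).congr_deriv (by ring))
    (by fun_prop) (by simp)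
  have hpos : 0 < ∫ θ in (0:ℝ)..2 * π, sin θ ^ 2 * (x * cos θ * (exp (x * cos θ) - 1)) := by
    refine intervalIntegral_pos_of_nonneg_of_pos_on_Ioo
      ((by fun_prop : Continuous _).intervalIntegrable _ _)
      (fun θ _ => mul_nonneg (sq_nonneg _) (mul_exp_sub_one_nonneg _))
      le_rfl (d := π / 2) (by positivity) (by linarith [pi_pos]) fun θ hθ => ?_
    have hsin := sin_pos_of_pos_of_lt_pi hθ.1 (by linarith [hθ.2, pi_pos])
    have hcos := cos_pos_of_mem_Ioo ⟨by linarith [hθ.1, pi_pos], hθ.2⟩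
    exact mul_pos (by positivity) (mul_exp_sub_one_pos (mul_ne_zero hx hcos.ne'))
  have hint : ∀ f : ℝ → ℝ, Continuous f → IntervalIntegrable f MeasureTheory.volume 0 (2 * π) :=
    fun f hf => hf.intervalIntegrable _ _
  have hsplit : ∫ θ in (0:ℝ)..2 * π, sin θ ^ 2 * (x * cos θ * (exp (x * cos θ) - 1)) =
      x * (∫ θ in (0:ℝ)..2 * π, sin θ * cos θ * sin θ * exp (x * cos θ)) -
        x * ∫ θ in (0:ℝ)..2 * π, sin θ ^ 2 * cos θ := by
    rw [← integral_const_mul, ← integral_const_mul, ← integral_sub (hint _ (by fun_prop))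
      (hint _ (by fun_prop))]
    exact integral_congr fun θ _ => by ring
  have hdouble : ∫ θ in (0:ℝ)..2 * π, (cos θ ^ 2 - sin θ ^ 2) * exp (x * cos θ) =
      (∫ θ in (0:ℝ)..2 * π, exp (x * cos θ)) -
        2 * ∫ θ in (0:ℝ)..2 * π, sin θ ^ 2 * exp (x * cos θ) := by
    rw [← integral_const_mul, ← integral_sub (hint _ (by fun_prop)) (hint _ (by fun_prop))]
    exact integral_congr fun θ _ => by simp only [cos_sq']; ring
  have hodd : ∫ θ in (0:ℝ)..2 * π, sin θ ^ 2 * cos θ = 0 := by simp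
  rw [hsplit, hodd, ← hparts, hdouble] at hpos
  linarith

theorem V_neg {x : ℝ} (hx : x < 0) : V x < 0 := by
  rw [V_eq_s11]
  exact div_neg_of_neg_of_pos (mul_neg_of_neg_of_pos hx (integral_sin_sq_mul_exp_mul_cos_pos x))
    (integral_exp_mul_cos_pos x)

theorem V_lt_half {x : ℝ} (hx : 0 < x) : V x < x / 2 := by
  rw [V_eq_s11, div_lt_iff₀ (integral_exp_mul_cos_pos x)]
  linarith [mul_lt_mul_of_pos_left (two_mul_integral_sin_sq_mul_exp_mul_cos_lt hx.ne') hx]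

theorem h1_neg_of_le_general (K₁ L₁ r₁ r₂ : ℝ) (hL₁ : L₁ ≠ 0)
    (hr₁ : r₁ ∈ Icc (0:ℝ) 1)
    (hne : (r₁, r₂) ≠ (0, 0))
    (hge : r₁ ≥ (K₁ * r₁ + L₁ * r₂) / 2) :
    V (K₁ * r₁ + L₁ * r₂) < r₁ := by
  rcases lt_trichotomy (K₁ * r₁ + L₁ * r₂) 0 with hx | hx | hx
  · linarith [V_neg hx, hr₁.1]
  · have hr₁0 : r₁ ≠ 0 := by
      rintro rfl
      have hr₂0 : r₂ ≠ 0 := fun h => hne (by rw [h])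
      exact mul_ne_zero hL₁ hr₂0 (by linarith)
    rw [hx, V_eq_s11]
    simpa using lt_of_le_of_ne hr₁.1 hr₁0.symm
  · linarith [V_lt_half hx]

theorem h1_neg_of_le (K₁ L₁ r₁ r₂ : ℝ) (hL₁ : L₁ ≠ 0)
    (hr₁ : r₁ ∈ Icc (0:ℝ) 1) (hr₂ : r₂ ∈ Icc (0:ℝ) 1)
    (hne : (r₁, r₂) ≠ (0, 0))
    (hge : r₁ ≥ (K₁ * r₁ + L₁ * r₂) / 2) :
    V (K₁ * r₁ + L₁ * r₂) < r₁ :=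
  h1_neg_of_le_general K₁ L₁ r₁ r₂ hL₁ hr₁ hne hge
end
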